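/- Fix A > 0 and α ∈ [0, A], and for each integer d ≥ 2 set β_d = 1/d + α/d². Then the ratio (d·p_{≥2}(β_d) − d·p₂(β_d)·(1 − p_{≥2}(β_d))^{d−1}) / (1 − (1 − p_{≥2}(β_d))^d − d·p₂(β_d)·(1 − p_{≥2}(β_d))^{d−1}) converges to 10/7 as d → ∞. In particular, the ratio is at most 2 for all sufficiently large d. -/

import Mathlib

/-- The Poisson(β) probability mass function `p_j(β) = e^{−β} β^j / j!`. -/
noncomputable def poissonProb (β : ℝ) (j : ℕ) : ℝ :=
  Real.exp (-β) * β ^ j / (Nat.factorial j)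

/-- The Poisson(β) tail probability `p_{≥k}(β) = Σ_{j≥k} e^{−β} β^j / j!`. -/
noncomputable def poissonTail (β : ℝ) (k : ℕ) : ℝ :=
  ∑' j : ℕ, if k ≤ j then poissonProb β j else 0

/-- `Σ_{k=1}^d k·P(A'_k) = d·p_{≥2}(β) − d·p₂(β)·(1 − p_{≥2}(β))^{d−1}` (numerator). -/
noncomputable def numA' (α : ℝ) (d : ℕ) : ℝ :=
  (d : ℝ) * poissonTail (1 / (d : ℝ) + α / (d : ℝ) ^ 2) 2
    - (d : ℝ) * poissonProb (1 / (d : ℝ) + α / (d : ℝ) ^ 2) 2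
        * (1 - poissonTail (1 / (d : ℝ) + α / (d : ℝ) ^ 2) 2) ^ (d - 1)

/-- `Σ_{k=1}^d P(A'_k) = 1 − (1 − p_{≥2}(β))^d − d·p₂(β)·(1 − p_{≥2}(β))^{d−1}`
(denominator). -/
noncomputable def denA' (α : ℝ) (d : ℕ) : ℝ :=
  1 - (1 - poissonTail (1 / (d : ℝ) + α / (d : ℝ) ^ 2) 2) ^ d
    - (d : ℝ) * poissonProb (1 / (d : ℝ) + α / (d : ℝ) ^ 2) 2
        * (1 - poissonTail (1 / (d : ℝ) + α / (d : ℝ) ^ 2) 2) ^ (d - 1)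

/-!
With `β_d = 1/d + α/d²` we have `d β_d → 1`, so by the Taylor expansion of `exp` at `0`,
`d² p_{≥2}(β_d) → 1/2`, `d² p₂(β_d) → 1/2` and `d³ p_{≥3}(β_d) → 1/6`, where
`p_{≥3} = p_{≥2} − p₂`. For `t = p_{≥2}(β_d)`, so that `d² t → 1/2`, elementary binomial bounds
give `d (1 − (1 − t)^{d−1}) → 1/2` and `d² (1 − (1 − t)^{d−1} (1 + (d − 1) t)) → 1/8`.
Writing the numerator as `d p_{≥3} + d p₂ (1 − (1 − t)^{d−1})` and the denominator as
`(1 − (1 − t)^{d−1} (1 + (d − 1) t)) + d p_{≥3} (1 − t)^{d−1}`, we get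
`d² · numerator → 1/6 + 1/4 = 5/12` and `d² · denominator → 1/8 + 1/6 = 7/24`.
-/
open Filter Finset Real Topology Asymptotics
open scoped Nat

theorem poissonTail_eq (β : ℝ) (k : ℕ) :
    poissonTail β k = exp (-β) * (exp β - ∑ i ∈ range k, β ^ i / i !) := by
  have hexp : HasSum (fun j : ℕ => β ^ j / j !) (exp β) := by
    rw [exp_eq_exp_ℝ]; exact NormedSpace.expSeries_div_hasSum_exp β
  have htail : HasSum (fun j : ℕ => if k ≤ j then β ^ j / j ! else 0)
      (exp β - ∑ i ∈ range k, β ^ i / i !) := by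
    rw [← hasSum_nat_add_iff' k]
    simpa [Finset.sum_ite_of_false, Finset.mem_range] using (hasSum_nat_add_iff' k).2 hexp
  have hprob : ∀ j, (if k ≤ j then poissonProb β j else 0)
      = exp (-β) * (if k ≤ j then β ^ j / j ! else 0) := by
    intro j; split_ifs <;> simp [poissonProb, mul_div_assoc]
  simp only [poissonTail, hprob, tsum_mul_left, htail.tsum_eq]

theorem poissonTail_succ (β : ℝ) (k : ℕ) :
    poissonTail β (k + 1) = poissonTail β k - poissonProb β k := by
  rw [poissonTail_eq, poissonTail_eq, sum_range_succ, poissonProb]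
  ring

theorem poissonTail_mem_Icc {β : ℝ} (hβ : 0 ≤ β) (k : ℕ) : poissonTail β k ∈ Set.Icc 0 1 := by
  have hsum : 0 ≤ ∑ i ∈ range k, β ^ i / i ! := sum_nonneg fun i _ => by positivity
  rw [poissonTail_eq]
  refine ⟨mul_nonneg (exp_pos _).le (sub_nonneg.2 (sum_le_exp_of_nonneg hβ k)), ?_⟩
  rw [mul_sub, ← exp_add, neg_add_cancel, exp_zero]
  linarith [mul_nonneg (exp_pos (-β)).le hsum]

theorem tendsto_zero_of_tendsto_natCast_mul {b : ℕ → ℝ} {L : ℝ}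
    (hb : Tendsto (fun d : ℕ => (d : ℝ) * b d) atTop (𝓝 L)) : Tendsto b atTop (𝓝 0) := by
  have h := hb.mul tendsto_inv_atTop_nhds_zero_nat
  rw [mul_zero] at h
  refine h.congr' ?_
  filter_upwards [eventually_ne_atTop 0] with d hd
  field_simp

theorem tendsto_pow_mul_exp_sub_sum_range {b : ℕ → ℝ} {L : ℝ}
    (hb : Tendsto (fun d : ℕ => (d : ℝ) * b d) atTop (𝓝 L)) (k : ℕ) :
    Tendsto (fun d : ℕ => (d : ℝ) ^ k * (exp (b d) - ∑ i ∈ range (k + 1), b d ^ i / i !))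
      atTop (𝓝 0) := by
  have hsmall := (exp_sub_sum_range_succ_isLittleO_pow k).comp_tendsto
    (tendsto_zero_of_tendsto_natCast_mul hb)
  have hbounded : (fun d : ℕ => ((d : ℝ) * b d) ^ k) =O[atTop] (fun _ => (1 : ℝ)) :=
    (hb.pow k).isBigO_one ℝ
  refine (isLittleO_one_iff ℝ).1 (((isBigO_refl (fun d : ℕ => (d : ℝ) ^ k) atTop).mul_isLittleO
    hsmall).trans_isBigO ?_)
  simpa [Function.comp_def, mul_pow] using hbounded

theorem tendsto_pow_mul_poissonProb {b : ℕ → ℝ} {L : ℝ}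
    (hb : Tendsto (fun d : ℕ => (d : ℝ) * b d) atTop (𝓝 L)) (k : ℕ) :
    Tendsto (fun d : ℕ => (d : ℝ) ^ k * poissonProb (b d) k) atTop (𝓝 (L ^ k / k !)) := by
  have h := (tendsto_zero_of_tendsto_natCast_mul hb).neg.rexp.mul ((hb.pow k).div_const (k ! : ℝ))
  rw [neg_zero, exp_zero, one_mul] at h
  refine h.congr fun d => ?_
  rw [poissonProb, mul_pow]
  ring

theorem tendsto_pow_mul_poissonTail {b : ℕ → ℝ} {L : ℝ}
    (hb : Tendsto (fun d : ℕ => (d : ℝ) * b d) atTop (𝓝 L)) (k : ℕ) :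
    Tendsto (fun d : ℕ => (d : ℝ) ^ k * poissonTail (b d) k) atTop (𝓝 (L ^ k / k !)) := by
  have hexp : Tendsto (fun d => exp (-b d)) atTop (𝓝 1) := by
    simpa using (tendsto_zero_of_tendsto_natCast_mul hb).neg.rexp
  have h := (hexp.mul (tendsto_pow_mul_exp_sub_sum_range hb k)).add
    (tendsto_pow_mul_poissonProb hb k)
  rw [mul_zero, zero_add] at h
  refine h.congr fun d => ?_
  rw [poissonTail_eq, sum_range_succ, poissonProb]
  ring

section Binomial

variable {t : ℝ}

theorem one_sub_pow_le (ht : t ∈ Set.Icc 0 1) (n : ℕ) :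
    (1 - t) ^ n ≤ 1 - n * t + (n * t) ^ 2 / 2 := by
  induction n with
  | zero => simp
  | succ n ih =>
    rw [pow_succ]
    push_cast
    nlinarith [mul_le_mul_of_nonneg_right ih (sub_nonneg.2 ht.2), sq_nonneg t,
      mul_nonneg (sq_nonneg (n : ℝ)) (pow_nonneg ht.1 3)]

theorem one_sub_mul_le_one_sub_pow (ht : t ≤ 2) (n : ℕ) : 1 - n * t ≤ (1 - t) ^ n := by
  simpa [sub_eq_add_neg] using one_add_mul_le_pow (by linarith : -2 ≤ -t) n

-- `1 - (1 - t) ^ n * (1 + n * t)` is the probability that a Binomial(n + 1, t) variable is `≥ 2`.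
theorem one_sub_one_sub_pow_mul_succ (n : ℕ) :
    1 - (1 - t) ^ (n + 1) * (1 + (n + 1 : ℕ) * t)
      = (1 - (1 - t) ^ n * (1 + n * t)) + (n + 1) * t ^ 2 * (1 - t) ^ n := by
  push_cast; ring

theorem one_sub_one_sub_pow_mul_le (ht : t ∈ Set.Icc 0 1) (n : ℕ) :
    1 - (1 - t) ^ n * (1 + n * t) ≤ n * (n + 1) / 2 * t ^ 2 := by
  induction n with
  | zero => simp
  | succ n ih =>
    have hpow : (1 - t) ^ n ≤ 1 := pow_le_one₀ (by linarith [ht.2]) (by linarith [ht.1])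
    rw [one_sub_one_sub_pow_mul_succ]
    push_cast
    nlinarith [mul_le_mul_of_nonneg_left hpow (by positivity : (0:ℝ) ≤ (n + 1) * t ^ 2)]

theorem le_one_sub_one_sub_pow_mul (ht : t ∈ Set.Icc 0 1) (n : ℕ) :
    n * (n + 1) / 2 * t ^ 2 - (n * t) ^ 3 / 3 ≤ 1 - (1 - t) ^ n * (1 + n * t) := by
  induction n with
  | zero => simp
  | succ n ih =>
    have hpow := one_sub_mul_le_one_sub_pow (by linarith [ht.2] : t ≤ 2) n
    rw [one_sub_one_sub_pow_mul_succ]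
    push_cast
    nlinarith [mul_le_mul_of_nonneg_left hpow (by positivity : (0:ℝ) ≤ (n + 1) * t ^ 2),
      ht.1, pow_nonneg ht.1 3, mul_nonneg (Nat.cast_nonneg n : (0:ℝ) ≤ n) (pow_nonneg ht.1 3)]

end Binomial

section Sequences

variable {t : ℕ → ℝ} {c : ℝ}

theorem tendsto_natCast_mul_pred_mul (hc : Tendsto (fun d : ℕ => (d : ℝ) ^ 2 * t d) atTop (𝓝 c)) :
    Tendsto (fun d : ℕ => (d : ℝ) * ((d - 1 : ℕ) : ℝ) * t d) atTop (𝓝 c) := by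
  have h := hc.sub (hc.mul tendsto_inv_atTop_nhds_zero_nat)
  rw [mul_zero, sub_zero] at h
  refine h.congr' ?_
  filter_upwards [eventually_ge_atTop 1] with d hd
  have hd0 : (d : ℝ) ≠ 0 := by positivity
  rw [Nat.cast_sub hd]
  field_simp
  ring

theorem tendsto_natCast_mul_one_sub_one_sub_pow_pred (ht : ∀ᶠ d in atTop, t d ∈ Set.Icc 0 1)
    (hc : Tendsto (fun d : ℕ => (d : ℝ) ^ 2 * t d) atTop (𝓝 c)) :
    Tendsto (fun d : ℕ => (d : ℝ) * (1 - (1 - t d) ^ (d - 1))) atTop (𝓝 c) := by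
  have he := tendsto_natCast_mul_pred_mul hc
  have hlow := he.sub ((he.pow 2).mul tendsto_inv_atTop_nhds_zero_nat |>.div_const 2)
  rw [mul_zero, zero_div, sub_zero] at hlow
  refine tendsto_of_tendsto_of_tendsto_of_le_of_le' hlow he ?_ ?_
  · filter_upwards [ht, eventually_ge_atTop 1] with d hd hd1
    have hd0 : (d : ℝ) ≠ 0 := by positivity
    calc (d : ℝ) * (d - 1 : ℕ) * t d - ((d : ℝ) * (d - 1 : ℕ) * t d) ^ 2 * (d : ℝ)⁻¹ / 2
        = d * (1 - (1 - (d - 1 : ℕ) * t d + ((d - 1 : ℕ) * t d) ^ 2 / 2)) := by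
          field_simp; ring
      _ ≤ d * (1 - (1 - t d) ^ (d - 1)) := by gcongr; exact one_sub_pow_le hd (d - 1)
  · filter_upwards [ht] with d hd
    rw [mul_assoc]
    gcongr
    linarith [one_sub_mul_le_one_sub_pow (by linarith [hd.2] : t d ≤ 2) (d - 1)]

theorem tendsto_sq_mul_one_sub_one_sub_pow_pred_mul (ht : ∀ᶠ d in atTop, t d ∈ Set.Icc 0 1)
    (hc : Tendsto (fun d : ℕ => (d : ℝ) ^ 2 * t d) atTop (𝓝 c)) :
    Tendsto (fun d : ℕ => (d : ℝ) ^ 2 * (1 - (1 - t d) ^ (d - 1) * (1 + (d - 1 : ℕ) * t d)))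
      atTop (𝓝 (c ^ 2 / 2)) := by
  have he := tendsto_natCast_mul_pred_mul hc
  have hup := (hc.mul he).div_const 2
  have hlow := hup.sub ((he.pow 3).mul tendsto_inv_atTop_nhds_zero_nat |>.div_const 3)
  rw [mul_zero, zero_div, sub_zero] at hlow
  rw [← sq] at hup hlow
  refine tendsto_of_tendsto_of_tendsto_of_le_of_le' hlow hup ?_ ?_
  · filter_upwards [ht, eventually_ge_atTop 1] with d hd hd1
    have hd0 : (d : ℝ) ≠ 0 := by positivity
    have hpred : ((d - 1 : ℕ) : ℝ) + 1 = d := by rw [Nat.cast_sub hd1]; ring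
    calc (d : ℝ) ^ 2 * t d * (d * (d - 1 : ℕ) * t d) / 2
          - (d * (d - 1 : ℕ) * t d) ^ 3 * (d : ℝ)⁻¹ / 3
        = d ^ 2 * ((d - 1 : ℕ) * ((d - 1 : ℕ) + 1) / 2 * t d ^ 2
            - ((d - 1 : ℕ) * t d) ^ 3 / 3) := by
          rw [hpred]; field_simp
      _ ≤ _ := mul_le_mul_of_nonneg_left (le_one_sub_one_sub_pow_mul hd _) (by positivity)
  · filter_upwards [ht, eventually_ge_atTop 1] with d hd hd1
    have hpred : ((d - 1 : ℕ) : ℝ) + 1 = d := by rw [Nat.cast_sub hd1]; ring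
    calc _ ≤ (d : ℝ) ^ 2 * ((d - 1 : ℕ) * ((d - 1 : ℕ) + 1) / 2 * t d ^ 2) :=
          mul_le_mul_of_nonneg_left (one_sub_one_sub_pow_mul_le hd _) (by positivity)
      _ = _ := by rw [hpred]; ring

end Sequences

section RateOneOverD

variable {b : ℕ → ℝ}

theorem eventually_poissonTail_mem_Icc (hb : Tendsto (fun d : ℕ => (d : ℝ) * b d) atTop (𝓝 1))
    (k : ℕ) : ∀ᶠ d in atTop, poissonTail (b d) k ∈ Set.Icc 0 1 := by
  filter_upwards [hb.eventually (eventually_gt_nhds one_pos)] with d hd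
  exact poissonTail_mem_Icc (pos_of_mul_pos_right hd (Nat.cast_nonneg d)).le k

theorem tendsto_sq_mul_num (hb : Tendsto (fun d : ℕ => (d : ℝ) * b d) atTop (𝓝 1)) :
    Tendsto (fun d : ℕ => (d : ℝ) ^ 2 * ((d : ℝ) * poissonTail (b d) 2
      - (d : ℝ) * poissonProb (b d) 2 * (1 - poissonTail (b d) 2) ^ (d - 1)))
      atTop (𝓝 (5 / 12)) := by
  have hT : Tendsto (fun d : ℕ => (d : ℝ) ^ 2 * poissonTail (b d) 2) atTop (𝓝 (1 / 2)) := by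
    simpa [Nat.factorial] using tendsto_pow_mul_poissonTail hb 2
  have hP : Tendsto (fun d : ℕ => (d : ℝ) ^ 2 * poissonProb (b d) 2) atTop (𝓝 (1 / 2)) := by
    simpa [Nat.factorial] using tendsto_pow_mul_poissonProb hb 2
  have hT3 : Tendsto (fun d : ℕ => (d : ℝ) ^ 3 * poissonTail (b d) 3) atTop (𝓝 (1 / 6)) := by
    simpa [Nat.factorial] using tendsto_pow_mul_poissonTail hb 3
  have hR := tendsto_natCast_mul_one_sub_one_sub_pow_pred (eventually_poissonTail_mem_Icc hb 2) hT
  convert hT3.add (hP.mul hR) using 2 with d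
  · rw [poissonTail_succ _ 2]; ring
  · norm_num

theorem tendsto_sq_mul_den (hb : Tendsto (fun d : ℕ => (d : ℝ) * b d) atTop (𝓝 1)) :
    Tendsto (fun d : ℕ => (d : ℝ) ^ 2 * (1 - (1 - poissonTail (b d) 2) ^ d
      - (d : ℝ) * poissonProb (b d) 2 * (1 - poissonTail (b d) 2) ^ (d - 1)))
      atTop (𝓝 (7 / 24)) := by
  have hT : Tendsto (fun d : ℕ => (d : ℝ) ^ 2 * poissonTail (b d) 2) atTop (𝓝 (1 / 2)) := by
    simpa [Nat.factorial] using tendsto_pow_mul_poissonTail hb 2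
  have hT3 : Tendsto (fun d : ℕ => (d : ℝ) ^ 3 * poissonTail (b d) 3) atTop (𝓝 (1 / 6)) := by
    simpa [Nat.factorial] using tendsto_pow_mul_poissonTail hb 3
  have hIcc := eventually_poissonTail_mem_Icc hb 2
  have hQ := tendsto_sq_mul_one_sub_one_sub_pow_pred_mul hIcc hT
  have hx : Tendsto (fun d : ℕ => (1 - poissonTail (b d) 2) ^ (d - 1)) atTop (𝓝 1) := by
    have hR := tendsto_natCast_mul_one_sub_one_sub_pow_pred hIcc hT
    have h := (tendsto_const_nhds (x := (1 : ℝ))).sub (hR.mul tendsto_inv_atTop_nhds_zero_nat)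
    rw [mul_zero, sub_zero] at h
    refine h.congr' ?_
    filter_upwards [eventually_ne_atTop 0] with d hd
    field_simp
    ring
  have h := hQ.add (hT3.mul hx)
  rw [show ((1 : ℝ) / 2) ^ 2 / 2 + 1 / 6 * 1 = 7 / 24 by norm_num] at h
  refine h.congr' ?_
  filter_upwards [eventually_ge_atTop 1] with d hd
  obtain ⟨n, rfl⟩ := Nat.exists_eq_add_of_le' hd
  rw [poissonTail_succ _ 2, add_tsub_cancel_right, pow_succ]
  push_cast
  ring

end RateOneOverD

theorem tendsto_natCast_mul_one_div_add_div_sq (α : ℝ) :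
    Tendsto (fun d : ℕ => (d : ℝ) * (1 / d + α / d ^ 2)) atTop (𝓝 1) := by
  have h := (tendsto_const_nhds (x := (1 : ℝ))).add (tendsto_inv_atTop_nhds_zero_nat.const_mul α)
  rw [mul_zero, add_zero] at h
  refine h.congr' ?_
  filter_upwards [eventually_ne_atTop 0] with d hd
  field_simp

theorem ratio_A_prime_tendsto_general (α : ℝ) :
    Filter.Tendsto (fun d : ℕ => numA' α d / denA' α d) Filter.atTop (nhds (10 / 7)) ∧
      ∃ d₀ : ℕ, 2 ≤ d₀ ∧ ∀ d : ℕ, d₀ ≤ d → numA' α d / denA' α d ≤ 2 := by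
  have hβ := tendsto_natCast_mul_one_div_add_div_sq α
  have hnum : Tendsto (fun d : ℕ => (d : ℝ) ^ 2 * numA' α d) atTop (𝓝 (5 / 12)) :=
    tendsto_sq_mul_num hβ
  have hden : Tendsto (fun d : ℕ => (d : ℝ) ^ 2 * denA' α d) atTop (𝓝 (7 / 24)) :=
    tendsto_sq_mul_den hβ
  have hratio : Tendsto (fun d => numA' α d / denA' α d) atTop (𝓝 (10 / 7)) := by
    have h := hnum.div hden (by norm_num)
    rw [show (5 / 12 : ℝ) / (7 / 24) = 10 / 7 by norm_num] at h
    refine h.congr' ?_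
    filter_upwards [eventually_ne_atTop 0] with d hd
    exact mul_div_mul_left _ _ (by positivity)
  obtain ⟨N, hN⟩ := eventually_atTop.1 (hratio.eventually (eventually_le_nhds
    (by norm_num : (10 / 7 : ℝ) < 2)))
  exact ⟨hratio, max N 2, le_max_right _ _, fun d hd => hN d (le_of_max_le_left hd)⟩

/-- Fix `A > 0` and `α ∈ [0, A]`, and for each integer `d ≥ 2` set
`β_d = 1/d + α/d²`.  Then the ratio
`(d·p_{≥2}(β_d) − d·p₂(β_d)(1 − p_{≥2}(β_d))^{d−1}) /
 (1 − (1 − p_{≥2}(β_d))^d − d·p₂(β_d)(1 − p_{≥2}(β_d))^{d−1})`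
converges to `10/7` as `d → ∞`; in particular it is at most `2` for all large `d`. -/
theorem ratio_A_prime_tendsto (A : ℝ) (hA : 0 < A) (α : ℝ) (hα : α ∈ Set.Icc (0 : ℝ) A) :
    Filter.Tendsto (fun d : ℕ => numA' α d / denA' α d) Filter.atTop (nhds (10 / 7)) ∧
      ∃ d₀ : ℕ, 2 ≤ d₀ ∧ ∀ d : ℕ, d₀ ≤ d → numA' α d / denA' α d ≤ 2 :=
  ratio_A_prime_tendsto_general α
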